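/- Every full-dimensional polytope in ℝⁿ that is symmetric about the origin is a generalized ellipsoid centered at the origin, and every finite intersection of ellipsoids centered at the origin is a generalized ellipsoid centered at the origin. Here, a full-dimensional origin-symmetric polytope can be written as {x ∈ ℝⁿ : |aᵢᵀx| ≤ 1 for i = 1,…,m} for some vectors a₁,…,a_m ∈ ℝⁿ, and an ellipsoid centered at the origin is a set {x ∈ ℝⁿ : xᵀPx ≤ 1} with P positive definite. -/

import Mathlib

/-!
If `Q₁, …, Q_m` are positive semidefinite with no common kernel vector, and `L₁, …, L_m` are
polynomials that are nonnegative on `[-1, 1]`, sum to at most `1` there and satisfy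
`L_j(s_i) = δ_ij` at nodes `s_i ∈ [-1, 1]`, then `P(t) = ∑ L_i(t) Q_i` cuts out
`⋂ {xᵀ Q_i x ≤ 1}`: for every `t` the form `xᵀ P(t) x` is a sub-convex combination of the
`xᵀ Q_i x`, and at `t = s_i` it is `xᵀ Q_i x` itself.

Such weights come from stick-breaking, `L_i = (1 - u_i) ∏_{j > i} u_j`, whose sum telescopes to
`1 - ∏ u_j`. Take `u_j = T_{2^j}²` and `s_i` a zero of `T_{2^i}` in `[-1, 1]`: as
`T_{2^(j+1)} = 2 T_{2^j}² - 1`, every `T_{2^j}` with `j > i` is `±1` at `s_i`.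

A polytope `{x : |a_iᵀ x| ≤ 1}` is the case `Q_i = a_i a_iᵀ`; compactness excludes a common
kernel vector, i.e. a line through the origin inside the polytope.
-/

open Matrix Polynomial

/-- `E ⊆ ℝⁿ` is a generalized ellipsoid of degree `d` (GE-`d`) centered at the origin. -/
def IsGE (n d : ℕ) (E : Set (Fin n → ℝ)) : Prop :=
  ∃ P : Matrix (Fin n) (Fin n) (Polynomial ℝ),
    P.IsSymm ∧
    (∀ i j, (P i j).natDegree ≤ d) ∧
    (∀ t ∈ Set.Icc (-1 : ℝ) 1, (P.map (Polynomial.eval t)).PosSemidef) ∧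
    (∀ x : Fin n → ℝ,
      (∀ t ∈ Set.Icc (-1 : ℝ) 1, (P.map (Polynomial.eval t)).mulVec x = 0) → x = 0) ∧
    E = {x : Fin n → ℝ | ∀ t ∈ Set.Icc (-1 : ℝ) 1,
      x ⬝ᵥ (P.map (Polynomial.eval t)).mulVec x ≤ 1}

open Finset

lemma sum_one_sub_mul_prod_gt_eq_one_sub_prod {ι R : Type*} [LinearOrder ι] [CommRing R]
    (s : Finset ι) (u : ι → R) :
    ∑ i ∈ s, (1 - u i) * ∏ j ∈ s with i < j, u j = 1 - ∏ j ∈ s, u j := by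
  have := prod_add_ordered s u (fun i => 1 - u i)
  simp only [add_sub_cancel, prod_const_one, mul_one] at this
  linear_combination -this

noncomputable def chebyshevTTwoPow : ℕ → ℝ[X]
  | 0 => X
  | k + 1 => 2 * chebyshevTTwoPow k ^ 2 - 1

namespace chebyshevTTwoPow

@[simp] lemma eval_zero (t : ℝ) : (chebyshevTTwoPow 0).eval t = t := by
  simp [chebyshevTTwoPow]

@[simp] lemma eval_succ (k : ℕ) (t : ℝ) :
    (chebyshevTTwoPow (k + 1)).eval t = 2 * (chebyshevTTwoPow k).eval t ^ 2 - 1 := by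
  simp [chebyshevTTwoPow]

lemma mapsTo_eval (k : ℕ) :
    Set.MapsTo (chebyshevTTwoPow k).eval (Set.Icc (-1) 1) (Set.Icc (-1) 1) := by
  induction k with
  | zero => intro t ht; simpa using ht
  | succ k ih =>
    intro t ht
    obtain ⟨h₁, h₂⟩ := ih ht
    simp only [eval_succ, Set.mem_Icc]
    constructor <;> nlinarith

lemma surjOn_eval (k : ℕ) :
    Set.SurjOn (chebyshevTTwoPow k).eval (Set.Icc (-1) 1) (Set.Icc (-1) 1) := by
  induction k with
  | zero => intro y hy; exact ⟨y, hy, by simp⟩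
  | succ k ih =>
    intro y ⟨hy₁, hy₂⟩
    have hx : √((1 + y) / 2) ∈ Set.Icc (-1 : ℝ) 1 :=
      ⟨by linarith [Real.sqrt_nonneg ((1 + y) / 2)], Real.sqrt_le_one.mpr (by linarith)⟩
    obtain ⟨t, ht, hxt⟩ := ih hx
    refine ⟨t, ht, ?_⟩
    simp only at hxt ⊢
    rw [eval_succ, hxt, Real.sq_sqrt (by linarith)]
    ring

lemma eval_sq_eq_one_of_eval_eq_zero {k j : ℕ} {s : ℝ} (hs : (chebyshevTTwoPow k).eval s = 0)
    (hkj : k < j) : (chebyshevTTwoPow j).eval s ^ 2 = 1 := by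
  induction j, hkj using Nat.le_induction with
  | base => simp [hs]
  | succ j _ ih => rw [eval_succ, ih]; norm_num

end chebyshevTTwoPow

structure NodalWeights (m : ℕ) where
  weight : Fin m → ℝ[X]
  node : Fin m → ℝ
  node_mem : ∀ i, node i ∈ Set.Icc (-1 : ℝ) 1
  weight_nonneg : ∀ i, ∀ t ∈ Set.Icc (-1 : ℝ) 1, 0 ≤ (weight i).eval t
  sum_weight_le_one : ∀ t ∈ Set.Icc (-1 : ℝ) 1, ∑ i, (weight i).eval t ≤ 1
  weight_node : ∀ i j, (weight j).eval (node i) = if j = i then 1 else 0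

theorem NodalWeights.nonempty (m : ℕ) : Nonempty (NodalWeights m) := by
  choose s hs_mem hs using fun k : ℕ =>
    chebyshevTTwoPow.surjOn_eval k (show (0 : ℝ) ∈ Set.Icc (-1) 1 by norm_num)
  let u : Fin m → ℝ[X] := fun j => chebyshevTTwoPow j ^ 2
  have hu : ∀ j t, t ∈ Set.Icc (-1 : ℝ) 1 → (u j).eval t ∈ Set.Icc 0 1 := by
    intro j t ht
    obtain ⟨h₁, h₂⟩ := chebyshevTTwoPow.mapsTo_eval j ht
    simp only [u, eval_pow, Set.mem_Icc]
    constructor <;> nlinarith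
  refine ⟨{
    weight := fun i => (1 - u i) * ∏ j with i < j, u j
    node := fun i => s i
    node_mem := fun i => hs_mem i
    weight_nonneg := fun i t ht => ?_
    sum_weight_le_one := fun t ht => ?_
    weight_node := fun i j => ?_ }⟩
  · simp only [eval_mul, eval_sub, eval_one, eval_prod]
    exact mul_nonneg (sub_nonneg.2 (hu i t ht).2) (prod_nonneg fun j _ => (hu j t ht).1)
  · rw [← eval_finsetSum, sum_one_sub_mul_prod_gt_eq_one_sub_prod, eval_sub, eval_one, eval_prod,
      sub_le_self_iff]
    exact prod_nonneg fun j _ => (hu j t ht).1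
  · simp only [eval_mul, eval_sub, eval_one, eval_prod, u, eval_pow]
    rcases lt_trichotomy j i with hji | rfl | hij
    · rw [prod_eq_zero (i := i) (by simp [hji]) (by simp [hs]), if_neg hji.ne]; ring
    · rw [prod_eq_one fun k hk => chebyshevTTwoPow.eval_sq_eq_one_of_eval_eq_zero (hs j)
        (by simpa using hk)]
      simp [hs]
    · rw [chebyshevTTwoPow.eval_sq_eq_one_of_eval_eq_zero (hs i) hij, if_neg hij.ne']; ring

lemma dotProduct_sum_smul_mulVec {ι n : Type*} [Fintype n] (s : Finset ι) (c : ι → ℝ)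
    (Q : ι → Matrix n n ℝ) (x : n → ℝ) :
    x ⬝ᵥ (∑ i ∈ s, c i • Q i) *ᵥ x = ∑ i ∈ s, c i * (x ⬝ᵥ Q i *ᵥ x) := by
  simp [sum_mulVec, dotProduct_sum, smul_mulVec, dotProduct_smul]

namespace NodalWeights

variable {m n : ℕ} (w : NodalWeights m) (Q : Fin m → Matrix (Fin n) (Fin n) ℝ)

noncomputable def blend : Matrix (Fin n) (Fin n) ℝ[X] :=
  ∑ i, w.weight i • (Q i).map C

lemma map_eval_blend (t : ℝ) : (w.blend Q).map (eval t) = ∑ i, (w.weight i).eval t • Q i := by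
  ext p q
  simp [blend, Matrix.sum_apply, eval_finsetSum]

lemma map_eval_node_blend (i : Fin m) : (w.blend Q).map (eval (w.node i)) = Q i := by
  simp [map_eval_blend, w.weight_node]

lemma isSymm_blend (hQ : ∀ i, (Q i).IsSymm) : (w.blend Q).IsSymm :=
  IsSymm.ext fun p q => by simp [blend, Matrix.sum_apply, (hQ _).apply p q]

lemma natDegree_blend_le (p q : Fin n) :
    (w.blend Q p q).natDegree ≤ univ.sup fun i => (w.weight i).natDegree := by
  simp only [blend, Matrix.sum_apply, Matrix.smul_apply, map_apply, smul_eq_mul]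
  exact natDegree_sum_le_of_forall_le _ _ fun i _ =>
    (natDegree_mul_C_le _ _).trans (le_sup (f := fun i => (w.weight i).natDegree) (mem_univ i))

theorem isGE_blend (hQ : ∀ i, (Q i).PosSemidef)
    (hker : ∀ x, (∀ i, Q i *ᵥ x = 0) → x = 0) :
    IsGE n (univ.sup fun i => (w.weight i).natDegree) {x | ∀ i, x ⬝ᵥ Q i *ᵥ x ≤ 1} := by
  refine ⟨w.blend Q, w.isSymm_blend Q fun i => ?_, w.natDegree_blend_le Q, fun t ht => ?_,
    fun x hx => hker x fun i => ?_, ?_⟩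
  · simpa using (hQ i).isHermitian
  · rw [map_eval_blend]
    exact posSemidef_sum _ fun i _ => (hQ i).smul (w.weight_nonneg i t ht)
  · simpa [map_eval_node_blend] using hx _ (w.node_mem i)
  · ext x
    refine ⟨fun hx t ht => ?_,
      fun hx i => by simpa [map_eval_node_blend] using hx _ (w.node_mem i)⟩
    calc x ⬝ᵥ (w.blend Q).map (eval t) *ᵥ x
        = ∑ i, (w.weight i).eval t * (x ⬝ᵥ Q i *ᵥ x) := by
          rw [map_eval_blend, dotProduct_sum_smul_mulVec]
      _ ≤ ∑ i, (w.weight i).eval t :=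
          sum_le_sum fun i _ => mul_le_of_le_one_right (w.weight_nonneg i t ht) (hx i)
      _ ≤ 1 := w.sum_weight_le_one t ht

end NodalWeights

theorem exists_isGE_of_posSemidef {m n : ℕ} (Q : Fin m → Matrix (Fin n) (Fin n) ℝ)
    (hQ : ∀ i, (Q i).PosSemidef) (hker : ∀ x, (∀ i, Q i *ᵥ x = 0) → x = 0) :
    ∃ d, IsGE n d {x | ∀ i, x ⬝ᵥ Q i *ᵥ x ≤ 1} :=
  let ⟨w⟩ := NodalWeights.nonempty m
  ⟨_, w.isGE_blend Q hQ hker⟩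

lemma eq_zero_of_forall_smul_mem {E : Type*} [NormedAddCommGroup E] [NormedSpace ℝ E]
    {s : Set E} (hs : Bornology.IsBounded s) {x : E} (hx : ∀ c : ℝ, c • x ∈ s) : x = 0 := by
  obtain ⟨r, hr⟩ := isBounded_iff_forall_norm_le.1 hs
  by_contra hx0
  have hpos : 0 < ‖x‖ := norm_pos_iff.2 hx0
  have := hr _ (hx ((|r| + 1) / ‖x‖))
  rw [norm_smul, Real.norm_eq_abs, abs_of_nonneg (by positivity),
    div_mul_cancel₀ _ hpos.ne'] at this
  linarith [le_abs_self r]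

lemma dotProduct_vecMulVec_self_mulVec {n : Type*} [Fintype n] (a x : n → ℝ) :
    x ⬝ᵥ vecMulVec a a *ᵥ x = (a ⬝ᵥ x) ^ 2 := by
  rw [vecMulVec_mulVec]
  simp [dotProduct_comm x, sq]

/-- every full-dimensional origin-symmetric polytope — i.e. every compact set
of the form `{x : |aᵢᵀx| ≤ 1, i = 1,…,m}` — is a generalized ellipsoid centered at the
origin, and every finite intersection of ellipsoids `{x : xᵀPᵢx ≤ 1}` (with each `Pᵢ`
positive definite) centered at the origin is a generalized ellipsoid centered at the
origin. -/
theorem stmt_15 {n : ℕ} :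
    (∀ (m : ℕ) (a : Fin m → (Fin n → ℝ)) (T : Set (Fin n → ℝ)),
        T = {x : Fin n → ℝ | ∀ i, |a i ⬝ᵥ x| ≤ 1} → IsCompact T →
        ∃ d : ℕ, IsGE n d T) ∧
    (∀ (m : ℕ), 1 ≤ m → ∀ P : Fin m → Matrix (Fin n) (Fin n) ℝ, (∀ i, (P i).PosDef) →
        ∃ d : ℕ, IsGE n d (⋂ i : Fin m, {x : Fin n → ℝ | x ⬝ᵥ (P i).mulVec x ≤ 1})) := by
  refine ⟨fun m a T hT hTc => ?_, fun m hm P hP => ?_⟩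
  · have hTQ : T = {x | ∀ i, x ⬝ᵥ vecMulVec (a i) (a i) *ᵥ x ≤ 1} := by
      simp only [hT, dotProduct_vecMulVec_self_mulVec, sq_le_one_iff_abs_le_one]
    refine hTQ ▸ exists_isGE_of_posSemidef _
      (fun i => by simpa using posSemidef_vecMulVec_self_star (a i))
      fun x hx => eq_zero_of_forall_smul_mem hTc.isBounded fun c => ?_
    have hax : ∀ i, a i ⬝ᵥ x = 0 := fun i => by
      simpa [dotProduct_vecMulVec_self_mulVec] using congrArg (x ⬝ᵥ ·) (hx i)
    simp [hT, dotProduct_smul, hax]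
  · rw [Set.iInter_ofPred]
    refine exists_isGE_of_posSemidef P (fun i => (hP i).posSemidef) fun x hx => ?_
    by_contra hx0
    simpa [hx ⟨0, hm⟩] using (hP ⟨0, hm⟩).dotProduct_mulVec_pos hx0
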